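/- arXiv:1909.07360 — 7 statements merged into one kernel-verified Lean document; each statement's English description precedes it below -/
import Mathlib

section
/- The subgroup of SL(2,ℤ) generated by the matrices A = [[1,2],[0,1]], B = [[1,0],[2,1]], and −I is isomorphic to the direct product F₂ × C₂ of a free group of rank 2 and a cyclic group of order 2. In particular, A and B freely generate a free subgroup of rank 2 not containing −I, and −I is central. -/
instance : Fact (Even (Fintype.card (Fin 2))) := ⟨by decide⟩

/-!
Ping-pong (Sanov): `A^{±1}` and `B^{±1}` move nonzero integer vectors between four cones cut
out by the sign of `xy` and by comparing `|x|` with `|y|`, so no nontrivial reduced word in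
`A, B` acts trivially. The matrix `-1` is central of order two and lies outside `⟨A, B⟩`,
since every element of `⟨A, B⟩` has top-left entry `≡ 1 (mod 4)` and even off-diagonal
entries. Hence `⟨A, B, -1⟩ = ⟨A, B⟩ × ⟨-1⟩ ≅ F₂ × C₂`.
-/

open scoped MatrixGroups Pointwise

def SubMulAction.nonzero (G M : Type*) [Group G] [AddMonoid M] [DistribMulAction G M] :
    SubMulAction G M where
  carrier := {v | v ≠ 0}
  smul_mem' g _ := (smul_ne_zero_iff_ne g).2

@[simp] lemma SubMulAction.mem_nonzero {G M : Type*} [Group G] [AddMonoid M]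
    [DistribMulAction G M] {v : M} : v ∈ SubMulAction.nonzero G M ↔ v ≠ 0 := Iff.rfl

noncomputable def zmodMulEquivZPowers {G : Type*} [Group G] {g : G} {n : ℕ}
    (hg : orderOf g = n) : Multiplicative (ZMod n) ≃* Subgroup.zpowers g :=
  zmodMulEquivOfGenerator (g := ⟨g, Subgroup.mem_zpowers g⟩)
    (fun ⟨_, k, hk⟩ => ⟨k, Subtype.ext hk⟩) (Nat.card_zpowers g ▸ hg)

lemma commute_of_mem_zpowers_neg_one {G : Type*} [Group G] [HasDistribNeg G] (g : G) {z : G}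
    (hz : z ∈ Subgroup.zpowers (-1)) : Commute g z := by
  obtain ⟨k, rfl⟩ := Subgroup.mem_zpowers_iff.1 hz
  exact (Commute.neg_one_right g).zpow_right k

namespace Sanov

def A : SL(2, ℤ) := ⟨!![1, 2; 0, 1], by norm_num [Matrix.det_fin_two_of]⟩

def B : SL(2, ℤ) := ⟨!![1, 0; 2, 1], by norm_num [Matrix.det_fin_two_of]⟩

lemma coe_A : (A : Matrix (Fin 2) (Fin 2) ℤ) = !![1, 2; 0, 1] := rfl

lemma coe_B : (B : Matrix (Fin 2) (Fin 2) ℤ) = !![1, 0; 2, 1] := rfl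

def gens (i : Fin 2) : SL(2, ℤ) := if i = 0 then A else B

lemma range_gens : Set.range gens = {A, B} := by
  ext g
  simp [gens, Fin.exists_fin_two, eq_comm]

lemma A_smul (v : Fin 2 → ℤ) : A • v = ![v 0 + 2 * v 1, v 1] := by
  ext i
  fin_cases i <;>
    simp [Matrix.SpecialLinearGroup.smul_def, coe_A, Matrix.smul_eq_mulVec,
    Matrix.vecHead, Matrix.vecTail]

lemma B_smul (v : Fin 2 → ℤ) : B • v = ![v 0, 2 * v 0 + v 1] := by
  ext i
  fin_cases i <;>
    simp [Matrix.SpecialLinearGroup.smul_def, coe_B, Matrix.smul_eq_mulVec,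
    Matrix.vecHead, Matrix.vecTail]

lemma A_inv_smul (v : Fin 2 → ℤ) : A⁻¹ • v = ![v 0 - 2 * v 1, v 1] := by
  rw [inv_smul_eq_iff, A_smul]
  ext i
  fin_cases i <;> simp

lemma B_inv_smul (v : Fin 2 → ℤ) : B⁻¹ • v = ![v 0, v 1 - 2 * v 0] := by
  rw [inv_smul_eq_iff, B_smul]
  ext i
  fin_cases i <;> simp

abbrev NonzeroVec := SubMulAction.nonzero SL(2, ℤ) (Fin 2 → ℤ)

lemma NonzeroVec.ne_zero (v : NonzeroVec) : v.1 0 ≠ 0 ∨ v.1 1 ≠ 0 := by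
  by_contra! h
  exact v.2 (funext <| Fin.forall_fin_two.2 h)

/- With `x = v 0` and `y = v 1`: `XA = {|y| < |x|, 0 < xy}`, `YA = {|y| ≤ |x|, xy ≤ 0}`,
`XB = {|x| ≤ |y|, 0 < xy}` and `YB = {|x| < |y|, xy ≤ 0}`, written as linear inequalities. -/
def XA : Set NonzeroVec :=
  {v | 0 < v.1 1 ∧ v.1 1 < v.1 0 ∨ v.1 0 < v.1 1 ∧ v.1 1 < 0}
def YA : Set NonzeroVec :=
  {v | 0 < v.1 0 ∧ -v.1 0 ≤ v.1 1 ∧ v.1 1 ≤ 0 ∨ v.1 0 < 0 ∧ 0 ≤ v.1 1 ∧ v.1 1 ≤ -v.1 0}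
def XB : Set NonzeroVec :=
  {v | 0 < v.1 0 ∧ v.1 0 ≤ v.1 1 ∨ v.1 1 ≤ v.1 0 ∧ v.1 0 < 0}
def YB : Set NonzeroVec :=
  {v | 0 < v.1 1 ∧ -v.1 1 < v.1 0 ∧ v.1 0 ≤ 0 ∨ v.1 1 < 0 ∧ 0 ≤ v.1 0 ∧ v.1 0 < -v.1 1}

lemma A_smul_compl_YA : A • YAᶜ ⊆ XA := by
  rintro - ⟨v, hv, rfl⟩
  have hv₀ := NonzeroVec.ne_zero v
  simp only [Set.mem_compl_iff, XA, YA, Set.mem_ofPred_eq, SubMulAction.val_smul, A_smul,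
    Matrix.cons_val_zero, Matrix.cons_val_one] at hv ⊢
  omega

lemma A_inv_smul_compl_XA : A⁻¹ • XAᶜ ⊆ YA := by
  rintro - ⟨v, hv, rfl⟩
  have hv₀ := NonzeroVec.ne_zero v
  simp only [Set.mem_compl_iff, XA, YA, Set.mem_ofPred_eq, SubMulAction.val_smul, A_inv_smul,
    Matrix.cons_val_zero, Matrix.cons_val_one] at hv ⊢
  omega

lemma B_smul_compl_YB : B • YBᶜ ⊆ XB := by
  rintro - ⟨v, hv, rfl⟩
  have hv₀ := NonzeroVec.ne_zero v
  simp only [Set.mem_compl_iff, XB, YB, Set.mem_ofPred_eq, SubMulAction.val_smul, B_smul,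
    Matrix.cons_val_zero, Matrix.cons_val_one] at hv ⊢
  omega

lemma B_inv_smul_compl_XB : B⁻¹ • XBᶜ ⊆ YB := by
  rintro - ⟨v, hv, rfl⟩
  have hv₀ := NonzeroVec.ne_zero v
  simp only [Set.mem_compl_iff, XB, YB, Set.mem_ofPred_eq, SubMulAction.val_smul, B_inv_smul,
    Matrix.cons_val_zero, Matrix.cons_val_one] at hv ⊢
  omega

lemma lift_gens_injective : Function.Injective (FreeGroup.lift gens) := by
  refine FreeGroup.injective_lift_of_ping_pong gens ![XA, XB] ![YA, YB]
    (Fin.forall_fin_two.2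
      ⟨⟨⟨![2, 1], by simp⟩, by simp [XA]⟩, ⟨⟨![1, 1], by simp⟩, by simp [XB]⟩⟩)
    ?_ ?_ ?_ (Fin.forall_fin_two.2 ⟨A_smul_compl_YA, B_smul_compl_YB⟩)
    (Fin.forall_fin_two.2 ⟨A_inv_smul_compl_XA, B_inv_smul_compl_XB⟩)
  all_goals
    intro i j
    fin_cases i <;> fin_cases j <;>
      first
      | exact fun h => absurd rfl h
      | exact fun _ => Set.disjoint_left.2 fun v h₁ h₂ => by
          simp [XA, XB, YA, YB] at h₁ h₂; omega
      | exact Set.disjoint_left.2 fun v h₁ h₂ => by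
          simp [XA, XB, YA, YB] at h₁ h₂; omega

lemma mul_eq_zero_of_two_mul_eq_zero {b c : ZMod 4} (hb : 2 * b = 0) (hc : 2 * c = 0) :
    b * c = 0 := by
  revert b c; decide

/- Closed under products because a product of two even residues vanishes mod `4`. -/
def diagOneModFour : Subgroup SL(2, ℤ) where
  carrier := {g | ((g : Matrix (Fin 2) (Fin 2) ℤ) 0 0 : ZMod 4) = 1 ∧
    2 * ((g : Matrix (Fin 2) (Fin 2) ℤ) 0 1 : ZMod 4) = 0 ∧
    2 * ((g : Matrix (Fin 2) (Fin 2) ℤ) 1 0 : ZMod 4) = 0}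
  mul_mem' := by
    rintro g h ⟨ha, hb, hc⟩ ⟨ha', hb', hc'⟩
    simp only [Set.mem_ofPred_eq, Matrix.SpecialLinearGroup.coe_mul, Matrix.mul_apply,
      Fin.sum_univ_two, Int.cast_add, Int.cast_mul]
    refine ⟨?_, ?_, ?_⟩
    · linear_combination (h 0 0 : ZMod 4) * ha + ha' + mul_eq_zero_of_two_mul_eq_zero hb hc'
    · linear_combination (g 0 0 : ZMod 4) * hb' + (h 1 1 : ZMod 4) * hb
    · linear_combination (h 0 0 : ZMod 4) * hc + (g 1 1 : ZMod 4) * hc'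
  one_mem' := by simp
  inv_mem' := by
    rintro g ⟨ha, hb, hc⟩
    have hdet : (g 0 0 : ZMod 4) * g 1 1 - g 0 1 * g 1 0 = 1 := by
      exact_mod_cast congrArg (Int.cast : ℤ → ZMod 4) ((Matrix.det_fin_two _).symm.trans g.2)
    simp only [Set.mem_ofPred_eq, Matrix.SpecialLinearGroup.coe_inv, Matrix.adjugate_fin_two,
      Matrix.of_apply, Matrix.cons_val', Matrix.cons_val_zero, Matrix.cons_val_one,
      Matrix.empty_val', Matrix.cons_val_fin_one, Int.cast_neg]
    refine ⟨?_, ?_, ?_⟩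
    · linear_combination hdet - (g 1 1 : ZMod 4) * ha + mul_eq_zero_of_two_mul_eq_zero hb hc
    · linear_combination -hb
    · linear_combination -hc

lemma closure_le_diagOneModFour : Subgroup.closure {A, B} ≤ diagOneModFour := by
  rw [Subgroup.closure_le]
  rintro g (rfl | rfl) <;> exact ⟨by decide, by decide, by decide⟩

lemma neg_one_not_mem_diagOneModFour : -1 ∉ diagOneModFour :=
  fun h => absurd h.1 (by decide)

lemma neg_one_not_mem_closure : -1 ∉ Subgroup.closure {A, B} :=
  fun h => neg_one_not_mem_diagOneModFour (closure_le_diagOneModFour h)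

lemma disjoint_diagOneModFour_zpowers_neg_one :
    Disjoint diagOneModFour (Subgroup.zpowers (-1)) := by
  rw [Subgroup.disjoint_def]
  intro g hg hg'
  obtain ⟨k, rfl⟩ := Subgroup.mem_zpowers_iff.1 hg'
  rcases Int.even_or_odd k with hk | hk
  · exact hk.neg_one_zpow
  · rw [hk.neg_one_zpow] at hg
    exact absurd hg neg_one_not_mem_diagOneModFour

lemma range_lift_gens : (FreeGroup.lift gens).range = Subgroup.closure {A, B} := by
  rw [FreeGroup.range_lift_eq_closure, range_gens]

lemma orderOf_neg_one : orderOf (-1 : SL(2, ℤ)) = 2 :=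
  orderOf_eq_prime (by simp) (by decide)

noncomputable def negOneHom : Multiplicative (ZMod 2) →* SL(2, ℤ) :=
  (Subgroup.zpowers (-1)).subtype.comp (zmodMulEquivZPowers orderOf_neg_one).toMonoidHom

lemma negOneHom_injective : Function.Injective negOneHom :=
  Subtype.val_injective.comp (MulEquiv.injective _)

lemma range_negOneHom : negOneHom.range = Subgroup.zpowers (-1) := by
  rw [negOneHom, MonoidHom.range_comp, MonoidHom.range_eq_top.2 (MulEquiv.surjective _),
    ← MonoidHom.range_eq_map, Subgroup.range_subtype]

noncomputable def prodHom : FreeGroup (Fin 2) × Multiplicative (ZMod 2) →* SL(2, ℤ) :=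
  (FreeGroup.lift gens).noncommCoprod negOneHom fun _ n =>
    commute_of_mem_zpowers_neg_one _ (zmodMulEquivZPowers orderOf_neg_one n).2

lemma prodHom_injective : Function.Injective prodHom :=
  (MonoidHom.noncommCoprod_injective _ _ _).2 ⟨lift_gens_injective, negOneHom_injective, by
    rw [range_lift_gens, range_negOneHom]
    exact disjoint_diagOneModFour_zpowers_neg_one.mono_left closure_le_diagOneModFour⟩

lemma range_prodHom : prodHom.range = Subgroup.closure {A, B, -1} := by
  rw [prodHom, MonoidHom.noncommCoprod_range, range_lift_gens, range_negOneHom,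
    Subgroup.zpowers_eq_closure, ← Subgroup.closure_union, Set.insert_union,
    Set.singleton_union]

end Sanov

/-- The subgroup of `SL(2,ℤ)` generated by `A = [[1,2],[0,1]]`, `B = [[1,0],[2,1]]`
and `-I` is isomorphic to `F₂ × C₂`; moreover `A, B` freely generate a free subgroup
of rank 2 not containing `-I`, and `-I` is central. -/
theorem stmt_3 (A B : Matrix.SpecialLinearGroup (Fin 2) ℤ)
    (hA : (A : Matrix (Fin 2) (Fin 2) ℤ) = !![1, 2; 0, 1])
    (hB : (B : Matrix (Fin 2) (Fin 2) ℤ) = !![1, 0; 2, 1]) :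
    Nonempty ((Subgroup.closure {A, B, -1} : Subgroup (Matrix.SpecialLinearGroup (Fin 2) ℤ))
        ≃* FreeGroup (Fin 2) × Multiplicative (ZMod 2)) ∧
      Function.Injective (FreeGroup.lift (fun i : Fin 2 => if i = 0 then A else B)) ∧
      (-1 : Matrix.SpecialLinearGroup (Fin 2) ℤ) ∉ Subgroup.closure {A, B} ∧
      ∀ g : Matrix.SpecialLinearGroup (Fin 2) ℤ, g * (-1) = (-1) * g := by
  obtain rfl : A = Sanov.A := Subtype.ext hA
  obtain rfl : B = Sanov.B := Subtype.ext hB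
  refine ⟨⟨(MulEquiv.subgroupCongr Sanov.range_prodHom.symm).trans
      (MonoidHom.ofInjective Sanov.prodHom_injective).symm⟩,
    Sanov.lift_gens_injective, Sanov.neg_one_not_mem_closure,
    fun g => (Commute.neg_one_right g).eq⟩
end

section
/- The matrices A = [[1,2],[0,1]] and B = [[1,0],[2,1]] generate a free group of rank 2 in SL(2,ℤ). -/
/-!
Ping-pong on the plane with sets `X₀ = {|y| < |x|}` and `X₁ = {|x| < |y|}` of vectors (x, y).
For `n ≠ 0`, `Aⁿ = [[1, 2n], [0, 1]]` sends (x, y) ∈ X₁ to (x + 2ny, y), and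
`|x + 2ny| ≥ 2|y| - |x| > |y|`, so `Aⁿ • X₁ ⊆ X₀`; symmetrically `Bⁿ • X₀ ⊆ X₁`.
By the ping-pong lemma a nontrivial reduced word in `A`, `B` moves a vector of one set into the
other, so it is not the identity.
-/

open Function
open scoped Function Pointwise MatrixGroups

namespace FreeGroup

theorem injective_lift_of_ping_pong_zpow {ι G α : Type*} [Nontrivial ι] [Group G] [MulAction G α]
    (a : ι → G) (X : ι → Set α) (hXnonempty : ∀ i, (X i).Nonempty)
    (hXdisj : Pairwise (Disjoint on X))
    (hpp : Pairwise fun i j => ∀ n : ℤ, n ≠ 0 → a i ^ n • X j ⊆ X i) :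
    Injective (lift a) := by
  -- `FreeGroup ι` is the free product of copies of `FreeGroup Unit ≃ ℤ`.
  have hlift : lift a = (Monoid.CoprodI.lift fun i => lift fun _ => a i).comp
      (freeGroupEquivCoprodI (ι := ι)).toMonoidHom := by
    ext i; simp
  rw [hlift, MonoidHom.coe_comp]
  refine Injective.comp ?_ (MulEquiv.injective _)
  refine Monoid.CoprodI.lift_injective_of_ping_pong _ (Or.inr ⟨Classical.arbitrary ι, ?_⟩) X
    hXnonempty hXdisj fun i j hij h hh => ?_
  · exact Cardinal.ofNat_le_aleph0.trans (Cardinal.aleph0_le_mk _)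
  · obtain ⟨n, rfl⟩ : ∃ n : ℤ, of () ^ n = h := ⟨_, freeGroupUnitEquivInt.symm_apply_apply h⟩
    simpa using hpp hij n (by rintro rfl; simp at hh)

end FreeGroup

section

variable (R : Type*) [Lattice R] [AddGroup R] {ι : Type*}

def coordDominates (i : ι) : Set (ι → R) := {v | ∀ j ≠ i, |v j| < |v i|}

theorem pairwise_disjoint_coordDominates : Pairwise (Disjoint on coordDominates R (ι := ι)) :=
  fun i j hij => Set.disjoint_left.2 fun _ hi hj => (hi j hij.symm).asymm (hj i hij)

end

section

variable {R : Type*} [CommRing R] [LinearOrder R] [IsStrictOrderedRing R]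

theorem coordDominates_nonempty {ι : Type*} [DecidableEq ι] (i : ι) :
    (coordDominates R i).Nonempty :=
  ⟨Pi.single i 1, fun j hj => by simp [hj]⟩

theorem abs_lt_abs_add_mul_of_abs_lt {x y s : R} (hxy : |x| < |y|) (hs : 2 ≤ |s|) :
    |y| < |x + s * y| :=
  calc |y| < 2 * |y| - |x| := by linarith
    _ ≤ |s * y| - |x| := by rw [abs_mul]; gcongr
    _ ≤ |x + s * y| := by rw [add_comm]; exact abs_sub_abs_le_abs_add _ _

theorem two_le_abs_intCast_mul {s : R} (hs : 2 ≤ |s|) {n : ℤ} (hn : n ≠ 0) : 2 ≤ |n * s| := by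
  rw [abs_mul, ← Int.cast_abs]
  exact hs.trans (le_mul_of_one_le_left (abs_nonneg s) (mod_cast Int.one_le_abs hn))

end

namespace Matrix.SpecialLinearGroup

variable {R : Type*} [CommRing R]

theorem coe_zpow_of_coe_eq_upper {g : SL(2, R)} {s : R}
    (hg : (g : Matrix (Fin 2) (Fin 2) R) = !![1, s; 0, 1]) (n : ℤ) :
    ((g ^ n : SL(2, R)) : Matrix (Fin 2) (Fin 2) R) = !![1, n * s; 0, 1] := by
  induction n using Int.induction_on with
  | zero => simp [one_fin_two]
  | succ n ih =>
    rw [_root_.zpow_add_one, coe_mul, ih, hg, mul_fin_two]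
    push_cast; ring_nf
  | pred n ih =>
    rw [_root_.zpow_sub_one, coe_mul, ih, coe_inv, hg, adjugate_fin_two_of, mul_fin_two]
    push_cast; ring_nf

theorem coe_zpow_of_coe_eq_lower {g : SL(2, R)} {t : R}
    (hg : (g : Matrix (Fin 2) (Fin 2) R) = !![1, 0; t, 1]) (n : ℤ) :
    ((g ^ n : SL(2, R)) : Matrix (Fin 2) (Fin 2) R) = !![1, 0; n * t, 1] := by
  induction n using Int.induction_on with
  | zero => simp [one_fin_two]
  | succ n ih =>
    rw [_root_.zpow_add_one, coe_mul, ih, hg, mul_fin_two]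
    push_cast; ring_nf
  | pred n ih =>
    rw [_root_.zpow_sub_one, coe_mul, ih, coe_inv, hg, adjugate_fin_two_of, mul_fin_two]
    push_cast; ring_nf

section

variable [LinearOrder R] [IsStrictOrderedRing R]

theorem zpow_smul_coordDominates_one_subset_zero {g : SL(2, R)} {s : R}
    (hg : (g : Matrix (Fin 2) (Fin 2) R) = !![1, s; 0, 1]) (hs : 2 ≤ |s|) {n : ℤ} (hn : n ≠ 0) :
    g ^ n • coordDominates R (1 : Fin 2) ⊆ coordDominates R 0 := by
  rintro _ ⟨v, hv, rfl⟩ j hj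
  obtain rfl : j = 1 := by omega
  simpa [SpecialLinearGroup.smul_def, coe_zpow_of_coe_eq_upper hg, vecHead, vecTail] using
    abs_lt_abs_add_mul_of_abs_lt (hv 0 zero_ne_one) (two_le_abs_intCast_mul hs hn)

theorem zpow_smul_coordDominates_zero_subset_one {g : SL(2, R)} {t : R}
    (hg : (g : Matrix (Fin 2) (Fin 2) R) = !![1, 0; t, 1]) (ht : 2 ≤ |t|) {n : ℤ} (hn : n ≠ 0) :
    g ^ n • coordDominates R (0 : Fin 2) ⊆ coordDominates R 1 := by
  rintro _ ⟨v, hv, rfl⟩ j hj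
  obtain rfl : j = 0 := by omega
  have key := abs_lt_abs_add_mul_of_abs_lt (hv 1 one_ne_zero) (two_le_abs_intCast_mul ht hn)
  rw [add_comm] at key
  simpa [SpecialLinearGroup.smul_def, coe_zpow_of_coe_eq_lower hg, vecHead, vecTail] using key

theorem injective_lift_of_coe_eq_upper_lower {A B : SL(2, R)} {s t : R}
    (hA : (A : Matrix (Fin 2) (Fin 2) R) = !![1, s; 0, 1])
    (hB : (B : Matrix (Fin 2) (Fin 2) R) = !![1, 0; t, 1]) (hs : 2 ≤ |s|) (ht : 2 ≤ |t|) :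
    Injective (FreeGroup.lift ![A, B]) := by
  refine FreeGroup.injective_lift_of_ping_pong_zpow _ (coordDominates R) coordDominates_nonempty
    (pairwise_disjoint_coordDominates R) fun i j hij n hn => ?_
  fin_cases i <;> fin_cases j
  · exact absurd rfl hij
  · exact zpow_smul_coordDominates_one_subset_zero hA hs hn
  · exact zpow_smul_coordDominates_zero_subset_one hB ht hn
  · exact absurd rfl hij

end

end Matrix.SpecialLinearGroup

/-- Sanov: `A = [[1,2],[0,1]]` and `B = [[1,0],[2,1]]` freely generate a free
subgroup of rank 2 in `SL(2,ℤ)`. -/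
theorem stmt_4 (A B : Matrix.SpecialLinearGroup (Fin 2) ℤ)
    (hA : (A : Matrix (Fin 2) (Fin 2) ℤ) = !![1, 2; 0, 1])
    (hB : (B : Matrix (Fin 2) (Fin 2) ℤ) = !![1, 0; 2, 1]) :
    Function.Injective (FreeGroup.lift (fun i : Fin 2 => if i = 0 then A else B)) := by
  have hAB : (fun i : Fin 2 => if i = 0 then A else B) = ![A, B] := by
    ext i : 1; fin_cases i <;> rfl
  rw [hAB]
  exact Matrix.SpecialLinearGroup.injective_lift_of_coe_eq_upper_lower hA hB
    (by norm_num) (by norm_num)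
end

section
/- Let G be the subgroup of SL(2,ℤ) generated by T_x = [[1,1],[0,1]] and the transvection T_y along the primitive vector y = (1,2) (so T_y acts by v ↦ v + ⟨y,v⟩y). Then the orbit of the set of primitive vectors with even second coordinate under G is exactly the set of primitive vectors in ℤ² with even second coordinate; that is, for every primitive vector (a,b) with b even, T_{(a,b)} lies in G, and conversely every transvection in G is along a primitive vector with even second coordinate. -/
/-!
Conjugation by `g ∈ SL(2, ℤ)` sends `T_c` to `T_{g c}`, so the set of `c` with `T_c ∈ G` is
stable under `T_{(1,0)} : (a, b) ↦ (a + b, b)` and, since `T_{(1,2)} T_{(1,0)} = -[[1,0],[4,1]]`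
and `T_{-c} = T_c`, under `(a, b) ↦ (a, b + 4a)`. For coprime `(a, b)` with `b` even one of these
moves or their inverses strictly decreases `|a| + |b|` unless `(a, b) = ±(1, 0)` or `±(1, ±2)`,
and those lie in `G`.
Conversely `G ⊆ Γ₀(2)`, and the lower left entry of `T_{(a,b)}` is `-b²`.
-/

/-- The transvection (Dehn twist matrix) along `c = (c₁, c₂)`. -/
def transvection (c : ℤ × ℤ) : Matrix.SpecialLinearGroup (Fin 2) ℤ :=
  ⟨!![1 - c.1 * c.2, c.1 ^ 2; -c.2 ^ 2, 1 + c.1 * c.2], by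
    rw [Matrix.det_fin_two_of]; ring⟩

open CongruenceSubgroup
open scoped MatrixGroups

@[simp]
theorem coe_transvection (c : ℤ × ℤ) :
    (transvection c : Matrix (Fin 2) (Fin 2) ℤ) =
      !![1 - c.1 * c.2, c.1 ^ 2; -c.2 ^ 2, 1 + c.1 * c.2] :=
  rfl

theorem transvection_neg (c : ℤ × ℤ) : transvection (-c) = transvection c := by
  ext i j
  fin_cases i <;> fin_cases j <;> simp

theorem mul_transvection (g : SL(2, ℤ)) (c : ℤ × ℤ) :
    g * transvection c =
      transvection (g 0 0 * c.1 + g 0 1 * c.2, g 1 0 * c.1 + g 1 1 * c.2) * g := by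
  have hdet : g 0 0 * g 1 1 - g 0 1 * g 1 0 = 1 := by
    rw [← Matrix.det_fin_two]
    exact g.det_coe
  ext i j
  fin_cases i <;> fin_cases j <;> simp [Matrix.mul_apply, Fin.sum_univ_two]
  · linear_combination (g 0 0 * c.1 + g 0 1 * c.2) * c.2 * hdet
  · linear_combination -(g 0 0 * c.1 + g 0 1 * c.2) * c.1 * hdet
  · linear_combination (g 1 0 * c.1 + g 1 1 * c.2) * c.2 * hdet
  · linear_combination -(g 1 0 * c.1 + g 1 1 * c.2) * c.1 * hdet

theorem transvection_mulVec_mem_iff {H : Subgroup SL(2, ℤ)} {g : SL(2, ℤ)} (hg : g ∈ H)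
    (c : ℤ × ℤ) :
    transvection (g 0 0 * c.1 + g 0 1 * c.2, g 1 0 * c.1 + g 1 1 * c.2) ∈ H ↔
      transvection c ∈ H := by
  rw [eq_mul_inv_of_mul_eq (mul_transvection g c).symm, H.mul_mem_cancel_right (inv_mem hg),
    H.mul_mem_cancel_left hg]

theorem transvection_add_mem_iff {H : Subgroup SL(2, ℤ)} (h10 : transvection (1, 0) ∈ H)
    (a b : ℤ) : transvection (a + b, b) ∈ H ↔ transvection (a, b) ∈ H := by
  simpa using transvection_mulVec_mem_iff h10 (a, b)

theorem transvection_add_four_mul_mem_iff {H : Subgroup SL(2, ℤ)}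
    (h10 : transvection (1, 0) ∈ H) (h12 : transvection (1, 2) ∈ H) (a b : ℤ) :
    transvection (a, b + 4 * a) ∈ H ↔ transvection (a, b) ∈ H := by
  have h := transvection_mulVec_mem_iff (mul_mem h12 h10) (a, b)
  simp only [Matrix.SpecialLinearGroup.coe_mul, coe_transvection] at h
  rw [← h, ← transvection_neg]
  norm_num [Matrix.mul_apply, Fin.sum_univ_two]

theorem transvection_mem_Gamma0_two_iff (c : ℤ × ℤ) :
    transvection c ∈ Gamma0 2 ↔ Even c.2 := by
  rw [Gamma0_mem, ZMod.intCast_zmod_eq_zero_iff_dvd]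
  simp [← even_iff_two_dvd, Int.even_pow]

theorem natAbs_sub_lt_or_natAbs_add_lt {x y : ℤ} (hy : y ≠ 0) (h : y.natAbs < 2 * x.natAbs) :
    (x - y).natAbs < x.natAbs ∨ (x + y).natAbs < x.natAbs := by
  omega

theorem mem_of_isCoprime_of_even {S : Set (ℤ × ℤ)} (hneg : ∀ c, -c ∈ S ↔ c ∈ S)
    (h10 : (1, 0) ∈ S) (h12 : (1, 2) ∈ S) (hadd : ∀ a b, (a + b, b) ∈ S ↔ (a, b) ∈ S)
    (hadd4 : ∀ a b, (a, b + 4 * a) ∈ S ↔ (a, b) ∈ S) {a b : ℤ} (hab : IsCoprime a b)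
    (hb : Even b) : (a, b) ∈ S := by
  induction h : a.natAbs + b.natAbs using Nat.strong_induction_on generalizing a b with
  | _ n ih =>
  have ha : a ≠ 0 := by
    rintro rfl
    rcases Int.isUnit_iff.mp (isCoprime_zero_left.mp hab) with rfl | rfl <;> simp at hb
  rcases eq_or_ne b 0 with rfl | hb0
  · rcases Int.isUnit_iff.mp (isCoprime_zero_right.mp hab) with rfl | rfl
    · exact h10
    · simpa using (hneg (1, 0)).mpr h10
  rcases lt_trichotomy b.natAbs (2 * a.natAbs) with hlt | heq | hgt
  · rcases natAbs_sub_lt_or_natAbs_add_lt hb0 hlt with hdesc | hdesc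
    · have hab' : IsCoprime (a - b) b := by
        simpa [sub_eq_add_neg] using hab.add_mul_left_left (-1)
      simpa using (hadd (a - b) b).mpr (ih _ (by omega) hab' hb rfl)
    · exact (hadd a b).mp (ih _ (by omega) (by simpa using hab.add_mul_left_left 1) hb rfl)
  · have hunit : IsUnit a :=
      hab.isUnit_of_dvd' dvd_rfl (Int.natAbs_dvd_natAbs.mp (heq ▸ dvd_mul_left _ _))
    have h1m2 : (1, -2) ∈ S := (hadd4 1 (-2)).mp (by norm_num [h12])
    rcases Int.isUnit_iff.mp hunit with rfl | rfl <;>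
      rcases (by omega : b = 2 ∨ b = -2) with rfl | rfl
    · exact h12
    · exact h1m2
    · simpa using (hneg _).mpr h1m2
    · simpa using (hneg _).mpr h12
  · have h4a : Even (4 * a) := ⟨2 * a, by ring⟩
    rcases natAbs_sub_lt_or_natAbs_add_lt (x := b) (y := 4 * a) (by omega) (by omega)
      with hdesc | hdesc
    · have hab' : IsCoprime a (b - 4 * a) := by
        simpa [sub_eq_add_neg] using hab.add_mul_right_right (-4)
      simpa using (hadd4 a (b - 4 * a)).mpr (ih _ (by omega) hab' (hb.sub h4a) rfl)
    · exact (hadd4 a b).mp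
        (ih _ (by omega) (by simpa using hab.add_mul_right_right 4) (hb.add h4a) rfl)

/-- Claim 7.2 (first part): with `G = ⟨T_{(1,0)}, T_{(1,2)}⟩`, a transvection along a
primitive vector `(a,b)` lies in `G` if and only if `b` is even. -/
theorem stmt_5 :
    ∀ a b : ℤ, IsCoprime a b →
      (transvection (a, b) ∈ Subgroup.closure {transvection (1, 0), transvection (1, 2)}
        ↔ Even b) := by
  intro a b hab
  set G : Subgroup SL(2, ℤ) := Subgroup.closure {transvection (1, 0), transvection (1, 2)}
  have h10 : transvection (1, 0) ∈ G := Subgroup.subset_closure (by simp)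
  have h12 : transvection (1, 2) ∈ G := Subgroup.subset_closure (by simp)
  have hG : G ≤ Gamma0 2 := (Subgroup.closure_le _).mpr <| by
    rintro _ (rfl | rfl) <;> exact (transvection_mem_Gamma0_two_iff _).mpr (by decide)
  refine ⟨fun h => (transvection_mem_Gamma0_two_iff (a, b)).mp (hG h), fun hb => ?_⟩
  exact mem_of_isCoprime_of_even (S := {c | transvection c ∈ G})
    (fun c => by simp [transvection_neg]) h10 h12 (transvection_add_mem_iff h10)
    (transvection_add_four_mul_mem_iff h10 h12) hab hb
end

section
/- Every primitive vector (a,b) ∈ ℤ² with a+b odd can be reduced to one of ±(1,0) or ±(0,1) by repeatedly applying the matrices [[1,2],[0,1]]^{±1} and [[1,0],[2,1]]^{±1}; the reduction strictly decreases max(|a|,|b|) at each nontrivial step. Formally: for every primitive (a,b) with a+b odd, there is an element g of the subgroup generated by [[1,2],[0,1]] and [[1,0],[2,1]] with g·(a,b) ∈ {(1,0),(−1,0),(0,1),(0,−1)}. -/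
/-!
Left multiplication by `[[1,0],[2k,1]]` or `[[1,2k],[0,1]]` replaces `b` by `b + 2ka` or `a` by
`a + 2kb`. Both moves preserve coprimality and the parity of `a + b`. Oddness of `a + b` forbids
`|a| = |b|`, and when `0 < |a| < |b|` one of `b ± 2a` is smaller than `b`
in absolute value (symmetrically for `a`). So `|a| + |b|` can be decreased until a coordinate
vanishes, and coprimality then forces the other to be `±1`.
-/

open Matrix

namespace Matrix

variable {R : Type*} [CommRing R]

theorem mulVec_unipotent_upper (x a b : R) : !![1, x; 0, 1] *ᵥ ![a, b] = ![a + x * b, b] := by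
  ext i; fin_cases i <;> simp [mul_comm]

theorem mulVec_unipotent_lower (x a b : R) : !![1, 0; x, 1] *ᵥ ![a, b] = ![a, b + x * a] := by
  ext i; fin_cases i <;> simp [add_comm, mul_comm]

namespace SpecialLinearGroup

variable {M : SpecialLinearGroup (Fin 2) R} {x : R}

theorem coe_zpow_of_coe_eq_upper_s7 (hM : (M : Matrix (Fin 2) (Fin 2) R) = !![1, x; 0, 1])
    (k : ℤ) : ((M ^ k : SpecialLinearGroup (Fin 2) R) : Matrix (Fin 2) (Fin 2) R) =
      !![1, k * x; 0, 1] := by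
  have hinv : ((M⁻¹ : SpecialLinearGroup (Fin 2) R) : Matrix (Fin 2) (Fin 2) R) =
      !![1, -x; 0, 1] := by
    simp [hM, adjugate_fin_two]
  induction k with
  | zero => simp [one_fin_two]
  | succ k ih =>
    rw [_root_.zpow_add_one, coe_mul, ih, hM, mul_fin_two]
    congr <;> push_cast <;> ring
  | pred k ih =>
    rw [_root_.zpow_sub_one, coe_mul, ih, hinv, mul_fin_two]
    congr <;> push_cast <;> ring

theorem coe_zpow_of_coe_eq_lower_s7 (hM : (M : Matrix (Fin 2) (Fin 2) R) = !![1, 0; x, 1])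
    (k : ℤ) : ((M ^ k : SpecialLinearGroup (Fin 2) R) : Matrix (Fin 2) (Fin 2) R) =
      !![1, 0; k * x, 1] := by
  have hinv : ((M⁻¹ : SpecialLinearGroup (Fin 2) R) : Matrix (Fin 2) (Fin 2) R) =
      !![1, 0; -x, 1] := by
    simp [hM, adjugate_fin_two]
  induction k with
  | zero => simp [one_fin_two]
  | succ k ih =>
    rw [_root_.zpow_add_one, coe_mul, ih, hM, mul_fin_two]
    congr <;> push_cast <;> ring
  | pred k ih =>
    rw [_root_.zpow_sub_one, coe_mul, ih, hinv, mul_fin_two]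
    congr <;> push_cast <;> ring

end SpecialLinearGroup

end Matrix

section Reaches

variable {n R : Type*} [Fintype n] [DecidableEq n] [CommRing R]

def ReachesSet (H : Subgroup (SpecialLinearGroup n R)) (S : Set (n → R)) (v : n → R) : Prop :=
  ∃ g ∈ H, (g : Matrix n n R) *ᵥ v ∈ S

variable {H : Subgroup (SpecialLinearGroup n R)} {S : Set (n → R)} {v : n → R}

theorem ReachesSet.of_mem (hv : v ∈ S) : ReachesSet H S v :=
  ⟨1, H.one_mem, by simpa using hv⟩

theorem ReachesSet.of_mulVec {M : SpecialLinearGroup n R} (hM : M ∈ H)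
    (h : ReachesSet H S ((M : Matrix n n R) *ᵥ v)) : ReachesSet H S v := by
  obtain ⟨g, hg, hgv⟩ := h
  refine ⟨g * M, H.mul_mem hg hM, ?_⟩
  simpa [mulVec_mulVec] using hgv

end Reaches

def pmStdBasis : Set (Fin 2 → ℤ) := {![1, 0], ![-1, 0], ![0, 1], ![0, -1]}

theorem Int.exists_natAbs_add_mul_two_mul_lt {a b : ℤ} (ha : a ≠ 0)
    (hab : a.natAbs < b.natAbs) : ∃ k : ℤ, (b + k * 2 * a).natAbs < b.natAbs := by
  by_cases h : (b + 2 * a).natAbs < b.natAbs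
  · exact ⟨1, by simpa using h⟩
  · exact ⟨-1, by omega⟩

theorem reachesSet_pmStdBasis_of_isCoprime {A B : SpecialLinearGroup (Fin 2) ℤ}
    (hA : (A : Matrix (Fin 2) (Fin 2) ℤ) = !![1, 2; 0, 1])
    (hB : (B : Matrix (Fin 2) (Fin 2) ℤ) = !![1, 0; 2, 1])
    {a b : ℤ} (hab : IsCoprime a b) (hodd : Odd (a + b)) :
    ReachesSet (Subgroup.closure {A, B}) pmStdBasis ![a, b] := by
  induction h : a.natAbs + b.natAbs using Nat.strong_induction_on generalizing a b with
  | _ N ih =>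
  obtain rfl | ha := eq_or_ne a 0
  · rcases Int.isUnit_iff.mp (isCoprime_zero_left.mp hab) with rfl | rfl <;>
      exact .of_mem (by simp [pmStdBasis])
  obtain rfl | hb := eq_or_ne b 0
  · rcases Int.isUnit_iff.mp (isCoprime_zero_right.mp hab) with rfl | rfl <;>
      exact .of_mem (by simp [pmStdBasis])
  have hAmem : A ∈ Subgroup.closure {A, B} := Subgroup.subset_closure (by simp)
  have hBmem : B ∈ Subgroup.closure {A, B} := Subgroup.subset_closure (by simp)
  have hne : a.natAbs ≠ b.natAbs := by rw [Int.odd_iff] at hodd; omega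
  rcases hne.lt_or_gt with hlt | hgt
  · obtain ⟨k, hk⟩ := Int.exists_natAbs_add_mul_two_mul_lt ha hlt
    refine .of_mulVec (zpow_mem hBmem k) ?_
    rw [SpecialLinearGroup.coe_zpow_of_coe_eq_lower_s7 hB, Int.cast_id, mulVec_unipotent_lower]
    refine ih _ (by omega) (hab.add_mul_right_right _) ?_ rfl
    convert hodd.add_even (even_two_mul (k * a)) using 1; ring
  · obtain ⟨k, hk⟩ := Int.exists_natAbs_add_mul_two_mul_lt hb hgt
    refine .of_mulVec (zpow_mem hAmem k) ?_
    rw [SpecialLinearGroup.coe_zpow_of_coe_eq_upper_s7 hA, Int.cast_id, mulVec_unipotent_upper]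
    refine ih _ (by omega) (hab.add_mul_right_left _) ?_ rfl
    convert hodd.add_even (even_two_mul (k * b)) using 1; ring

/-- Every primitive vector `(a,b)` with `a+b` odd can be moved to one of
`±(1,0), ±(0,1)` by an element of the subgroup generated by `[[1,2],[0,1]]`
and `[[1,0],[2,1]]`. -/
theorem stmt_7 (A B : Matrix.SpecialLinearGroup (Fin 2) ℤ)
    (hA : (A : Matrix (Fin 2) (Fin 2) ℤ) = !![1, 2; 0, 1])
    (hB : (B : Matrix (Fin 2) (Fin 2) ℤ) = !![1, 0; 2, 1]) :
    ∀ a b : ℤ, IsCoprime a b → Odd (a + b) →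
      ∃ g ∈ Subgroup.closure {A, B},
        (g : Matrix (Fin 2) (Fin 2) ℤ).mulVec ![a, b]
          ∈ ({![1, 0], ![-1, 0], ![0, 1], ![0, -1]} : Set (Fin 2 → ℤ)) :=
  fun _ _ hab hodd => reachesSet_pmStdBasis_of_isCoprime hA hB hab hodd
end

section
/- The subgroup of SL(2,ℤ) generated by all squares of transvections along primitive vectors equals the subgroup generated by the three matrices [[1,2],[0,1]], [[1,0],[-2,1]], and the square of the transvection along (1,1), and this subgroup is isomorphic to F₂ × C₂. -/
open MatrixGroups CongruenceSubgroup Pointwise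

theorem FreeGroup.injective_lift_of_ping_pong_zpow_s11 {ι : Type*} [Nontrivial ι] {G : Type*}
    [Group G] (a : ι → G) {α : Type*} [MulAction G α] (X : ι → Set α)
    (hXnonempty : ∀ i, (X i).Nonempty) (hXdisj : Pairwise (Function.onFun Disjoint X))
    (hpp : ∀ i j, i ≠ j → ∀ n : ℤ, n ≠ 0 → a i ^ n • X j ⊆ X i) :
    Function.Injective (FreeGroup.lift a) := by
  have hlift : FreeGroup.lift a = (Monoid.CoprodI.lift fun i ↦ FreeGroup.lift fun _ ↦ a i).comp
      freeGroupEquivCoprodI.toMonoidHom := by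
    ext i; simp
  rw [hlift, MonoidHom.coe_comp]
  refine Function.Injective.comp ?_ freeGroupEquivCoprodI.injective
  refine Monoid.CoprodI.lift_injective_of_ping_pong _ (Or.inr ⟨Classical.arbitrary ι, ?_⟩)
    X hXnonempty hXdisj fun i j hij ↦ FreeGroup.freeGroupUnitEquivInt.forall_congr_left.2 ?_
  · exact le_trans (by exact_mod_cast (Cardinal.natCast_lt_aleph0 (n := 3)).le)
      (Cardinal.aleph0_le_mk _)
  · intro n hn
    change FreeGroup.lift (fun _ ↦ a i) (FreeGroup.of () ^ n) • X j ⊆ X i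
    rw [map_zpow, FreeGroup.lift_apply_of]
    exact hpp i j hij n (by rintro rfl; exact hn rfl)

theorem coe_transvection_zpow (c : ℤ × ℤ) (n : ℤ) :
    (↑(transvection c ^ n) : Matrix (Fin 2) (Fin 2) ℤ) =
      !![1 - n * c.1 * c.2, n * c.1 ^ 2; -n * c.2 ^ 2, 1 + n * c.1 * c.2] := by
  induction n using Int.induction_on with
  | zero => simp [Matrix.one_fin_two]
  | succ k ih =>
    rw [zpow_add_one, Matrix.SpecialLinearGroup.coe_mul, ih]
    simp only [transvection, Matrix.mul_fin_two]
    congr 1; ring_nf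
  | pred k ih =>
    rw [zpow_sub_one, Matrix.SpecialLinearGroup.coe_mul, ih, Matrix.SpecialLinearGroup.coe_inv]
    simp only [transvection, Matrix.adjugate_fin_two_of, Matrix.mul_fin_two]
    congr 1; ring_nf

theorem Matrix.SpecialLinearGroup.det_fin_two_eq_one {R : Type*} [CommRing R] (M : SL(2, R)) :
    M 0 0 * M 1 1 - M 0 1 * M 1 0 = 1 := by
  rw [← Matrix.det_fin_two]; exact M.det_coe

theorem mem_Gamma_two_iff {M : SL(2, ℤ)} : M ∈ Gamma 2 ↔ 2 ∣ M 0 1 ∧ 2 ∣ M 1 0 := by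
  simp only [Gamma_mem, ZMod.intCast_zmod_eq_zero_iff_dvd, ZMod.intCast_eq_one_iff_odd]
  refine ⟨fun h ↦ ⟨h.2.1, h.2.2.1⟩, fun ⟨⟨b, hb⟩, hc⟩ ↦ ?_⟩
  have hodd : Odd (M 0 0 * M 1 1) :=
    ⟨b * M 1 0, by linear_combination M.det_fin_two_eq_one + M 1 0 * hb⟩
  rw [Int.odd_mul] at hodd
  exact ⟨hodd.1, ⟨b, hb⟩, hc, hodd.2⟩

theorem transvection_sq_mem_Gamma_two (c : ℤ × ℤ) : transvection c ^ 2 ∈ Gamma 2 := by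
  rw [mem_Gamma_two_iff, ← zpow_natCast]
  simp only [coe_transvection_zpow, Matrix.of_apply, Matrix.cons_val', Matrix.cons_val_zero,
    Matrix.cons_val_one]
  exact ⟨⟨c.1 ^ 2, by push_cast; ring⟩, ⟨-c.2 ^ 2, by push_cast; ring⟩⟩

local notation "A" => transvection (1, 0) ^ 2
local notation "B" => transvection (0, 1) ^ 2

theorem coe_A_zpow (n : ℤ) : (↑(A ^ n) : Matrix (Fin 2) (Fin 2) ℤ) = !![1, 2 * n; 0, 1] := by
  rw [← zpow_natCast, ← zpow_mul, coe_transvection_zpow]; simp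

theorem coe_B_zpow (n : ℤ) :
    (↑(B ^ n) : Matrix (Fin 2) (Fin 2) ℤ) = !![1, 0; -(2 * n), 1] := by
  rw [← zpow_natCast, ← zpow_mul, coe_transvection_zpow]; simp

theorem A_zpow_smul (n : ℤ) (v : Fin 2 → ℤ) : A ^ n • v = ![v 0 + 2 * n * v 1, v 1] := by
  rw [Matrix.SpecialLinearGroup.smul_def, coe_A_zpow]
  ext i; fin_cases i <;> simp [Matrix.mulVec, dotProduct, Fin.sum_univ_two]

theorem B_zpow_smul (n : ℤ) (v : Fin 2 → ℤ) : B ^ n • v = ![v 0, v 1 - 2 * n * v 0] := by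
  rw [Matrix.SpecialLinearGroup.smul_def, coe_B_zpow]
  ext i; fin_cases i <;> simp [Matrix.mulVec, dotProduct, Fin.sum_univ_two]; ring

theorem Int.natAbs_lt_natAbs_add_two_mul {x y n : ℤ} (hxy : x.natAbs < y.natAbs) (hn : n ≠ 0) :
    y.natAbs < (x + 2 * n * y).natAbs := by
  have : 2 * y.natAbs ≤ (2 * n * y).natAbs := by
    rw [Int.natAbs_mul, Int.natAbs_mul]
    exact Nat.mul_le_mul_right _ (Nat.mul_le_mul_left 2 (by omega : 1 ≤ n.natAbs))
  omega

theorem injective_lift_A_B : Function.Injective (FreeGroup.lift ![A, B]) := by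
  refine FreeGroup.injective_lift_of_ping_pong_zpow_s11 _
    ![{v : Fin 2 → ℤ | (v 1).natAbs < (v 0).natAbs}, {v | (v 0).natAbs < (v 1).natAbs}]
    (fun i ↦ ?_) (fun i j hij ↦ ?_) (fun i j hij n hn ↦ ?_)
  · fin_cases i
    exacts [⟨![1, 0], by simp⟩, ⟨![0, 1], by simp⟩]
  · fin_cases i <;> fin_cases j <;> simp only [ne_eq, not_true_eq_false] at hij <;>
      exact Set.disjoint_left.2 fun v h1 h2 ↦ by simp at h1 h2; omega
  · fin_cases i <;> fin_cases j <;> simp only [ne_eq, not_true_eq_false] at hij <;>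
      rintro _ ⟨v, hv, rfl⟩
    · simpa [A_zpow_smul] using Int.natAbs_lt_natAbs_add_two_mul hv hn
    · simpa [B_zpow_smul, sub_eq_add_neg] using
        Int.natAbs_lt_natAbs_add_two_mul hv (neg_ne_zero.2 hn)

def Gamma2OneModFour : Subgroup SL(2, ℤ) where
  carrier := {M | M ∈ Gamma 2 ∧ M 0 0 ≡ 1 [ZMOD 4]}
  one_mem' := ⟨one_mem _, rfl⟩
  mul_mem' := by
    rintro M N ⟨hM, hM4⟩ ⟨hN, hN4⟩
    refine ⟨mul_mem hM hN, ?_⟩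
    have h4 : M 0 1 * N 1 0 ≡ 0 [ZMOD 4] :=
      Int.modEq_zero_iff_dvd.2 (mul_dvd_mul (mem_Gamma_two_iff.1 hM).1 (mem_Gamma_two_iff.1 hN).2)
    calc (M * N) 0 0 = M 0 0 * N 0 0 + M 0 1 * N 1 0 := by
          simp [Matrix.mul_apply, Fin.sum_univ_two]
      _ ≡ 1 * 1 + 0 [ZMOD 4] := (hM4.mul hN4).add h4
  inv_mem' := by
    rintro M ⟨hM, hM4⟩
    refine ⟨inv_mem hM, ?_⟩
    have h4 : M 0 1 * M 1 0 ≡ 0 [ZMOD 4] :=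
      Int.modEq_zero_iff_dvd.2 (mul_dvd_mul (mem_Gamma_two_iff.1 hM).1 (mem_Gamma_two_iff.1 hM).2)
    calc M⁻¹ 0 0 = 1 * M 1 1 := by simp [Matrix.SpecialLinearGroup.SL2_inv_expl]
      _ ≡ M 0 0 * M 1 1 [ZMOD 4] := hM4.symm.mul_right _
      _ = 1 + M 0 1 * M 1 0 := by linear_combination M.det_fin_two_eq_one
      _ ≡ 1 + 0 [ZMOD 4] := h4.add_left _

theorem neg_one_notMem_range_lift_A_B : -1 ∉ (FreeGroup.lift ![A, B]).range := by
  have hle : (FreeGroup.lift ![A, B]).range ≤ Gamma2OneModFour := by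
    rw [FreeGroup.range_lift_eq_closure, Subgroup.closure_le]
    rintro _ ⟨i, rfl⟩
    fin_cases i <;> exact ⟨transvection_sq_mem_Gamma_two _, by decide⟩
  exact fun h ↦ absurd (hle h).2 (by decide)

theorem closure_A_B_neg_one_le_Gamma_two : Subgroup.closure {A, B, -1} ≤ Gamma 2 :=
  (Subgroup.closure_le _).2 <| by
    rintro _ (rfl | rfl | rfl)
    exacts [transvection_sq_mem_Gamma_two _, transvection_sq_mem_Gamma_two _, by simp]

theorem mem_closure_of_lower_left_eq_zero {M : SL(2, ℤ)} (hM : M ∈ Gamma 2) (hc : M 1 0 = 0) :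
    M ∈ Subgroup.closure {A, B, -1} := by
  obtain ⟨k, hk⟩ := (mem_Gamma_two_iff.1 hM).1
  have hA (n : ℤ) : A ^ n ∈ Subgroup.closure {A, B, -1} :=
    zpow_mem (Subgroup.subset_closure (by simp)) n
  have hdet := M.det_fin_two_eq_one
  rw [hc, mul_zero, sub_zero] at hdet
  rcases Int.eq_one_or_neg_one_of_mul_eq_one' hdet with ⟨ha, hd⟩ | ⟨ha, hd⟩
  · convert hA k using 1
    ext i j; fin_cases i <;> fin_cases j <;> simp [coe_A_zpow, ha, hd, hk, hc]
  · have hneg : -1 ∈ Subgroup.closure {A, B, -1} := Subgroup.subset_closure (by simp)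
    convert mul_mem hneg (hA (-k)) using 1
    ext i j; fin_cases i <;> fin_cases j <;> simp [coe_A_zpow, ha, hd, hk, hc]

theorem Matrix.SpecialLinearGroup.mul_apply_eq_smul {n R : Type*} [DecidableEq n] [Fintype n]
    [CommRing R] (E M : SpecialLinearGroup n R) (i j : n) :
    (E * M) i j = (E • fun k ↦ M k j) i := by
  simp [Matrix.SpecialLinearGroup.smul_def, Matrix.mul_apply, Matrix.mulVec, dotProduct]

theorem exists_mem_closure_natAbs_lt {M : SL(2, ℤ)} (hM : M ∈ Gamma 2) (hc : M 1 0 ≠ 0) :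
    ∃ E ∈ Subgroup.closure {A, B, -1}, ((E * M) 0 0).natAbs + ((E * M) 1 0).natAbs <
      (M 0 0).natAbs + (M 1 0).natAbs := by
  obtain ⟨a, ha⟩ := ZMod.intCast_eq_one_iff_odd.1 (Gamma_mem.1 hM).1
  obtain ⟨c, hc'⟩ := (mem_Gamma_two_iff.1 hM).2
  simp only [Matrix.SpecialLinearGroup.mul_apply_eq_smul]
  rcases lt_or_gt_of_ne (show (M 0 0).natAbs ≠ (M 1 0).natAbs by omega) with h | h
  · obtain ⟨e, he⟩ : ∃ e : ℤ, (M 1 0 - 2 * e * M 0 0).natAbs < (M 1 0).natAbs :=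
      (by omega : (M 1 0 - 2 * 1 * M 0 0).natAbs < (M 1 0).natAbs ∨
        (M 1 0 - 2 * (-1) * M 0 0).natAbs < (M 1 0).natAbs).elim (⟨1, ·⟩) (⟨-1, ·⟩)
    refine ⟨B ^ e, zpow_mem (Subgroup.subset_closure (by simp)) e, ?_⟩
    simp only [B_zpow_smul, Matrix.cons_val_zero, Matrix.cons_val_one]
    omega
  · obtain ⟨e, he⟩ : ∃ e : ℤ, (M 0 0 + 2 * e * M 1 0).natAbs < (M 0 0).natAbs :=
      (by omega : (M 0 0 + 2 * 1 * M 1 0).natAbs < (M 0 0).natAbs ∨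
        (M 0 0 + 2 * (-1) * M 1 0).natAbs < (M 0 0).natAbs).elim (⟨1, ·⟩) (⟨-1, ·⟩)
    refine ⟨A ^ e, zpow_mem (Subgroup.subset_closure (by simp)) e, ?_⟩
    simp only [A_zpow_smul, Matrix.cons_val_zero, Matrix.cons_val_one]
    omega

theorem Gamma_two_eq_closure : Gamma 2 = Subgroup.closure {A, B, -1} := by
  refine le_antisymm (fun M hM ↦ ?_) closure_A_B_neg_one_le_Gamma_two
  induction h : (M 0 0).natAbs + (M 1 0).natAbs using Nat.strong_induction_on generalizing M with
  | _ n ih =>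
    by_cases hc : M 1 0 = 0
    · exact mem_closure_of_lower_left_eq_zero hM hc
    obtain ⟨E, hE, hlt⟩ := exists_mem_closure_natAbs_lt hM hc
    have hEM := ih _ (h ▸ hlt) _ (mul_mem (closure_A_B_neg_one_le_Gamma_two hE) hM) rfl
    simpa using mul_mem (inv_mem hE) hEM

def negOnePowHom : Multiplicative (ZMod 2) →* SL(2, ℤ) where
  toFun x := (-1) ^ x.toAdd.val
  map_one' := rfl
  map_mul' x y := by
    rw [toAdd_mul, ZMod.val_add, ← pow_add]
    exact (pow_eq_pow_mod _ neg_one_sq).symm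

theorem negOnePowHom_ofAdd_one : negOnePowHom (Multiplicative.ofAdd 1) = -1 :=
  pow_one _

theorem forall_multiplicative_zmod_two {p : Multiplicative (ZMod 2) → Prop} :
    (∀ x, p x) ↔ p 1 ∧ p (Multiplicative.ofAdd 1) := by
  refine ⟨fun h ↦ ⟨h _, h _⟩, fun h x ↦ ?_⟩
  obtain ⟨x, rfl⟩ := Multiplicative.ofAdd.surjective x
  fin_cases x
  exacts [h.1, h.2]

theorem injective_negOnePowHom : Function.Injective negOnePowHom := by
  rw [injective_iff_map_eq_one, forall_multiplicative_zmod_two, negOnePowHom_ofAdd_one]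
  exact ⟨fun _ ↦ rfl, fun h ↦ absurd h (by decide)⟩

theorem range_negOnePowHom : negOnePowHom.range = Subgroup.closure {-1} := by
  refine le_antisymm ?_ ((Subgroup.closure_le _).2 ?_)
  · rintro _ ⟨x, rfl⟩
    revert x
    rw [forall_multiplicative_zmod_two, negOnePowHom_ofAdd_one]
    exact ⟨one_mem _, Subgroup.subset_closure rfl⟩
  · rintro _ rfl
    exact ⟨Multiplicative.ofAdd 1, negOnePowHom_ofAdd_one⟩

def gammaTwoHom : FreeGroup (Fin 2) × Multiplicative (ZMod 2) →* SL(2, ℤ) :=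
  (FreeGroup.lift ![A, B]).noncommCoprod negOnePowHom
    fun _ _ ↦ (Commute.neg_one_right _).pow_right _

theorem injective_gammaTwoHom : Function.Injective gammaTwoHom := by
  refine (MonoidHom.noncommCoprod_injective _ _ _).2
    ⟨injective_lift_A_B, injective_negOnePowHom, Subgroup.disjoint_def.2 ?_⟩
  rintro _ hF ⟨x, rfl⟩
  revert x hF
  rw [forall_multiplicative_zmod_two, negOnePowHom_ofAdd_one]
  exact ⟨fun _ ↦ rfl, fun h ↦ absurd h neg_one_notMem_range_lift_A_B⟩

theorem range_gammaTwoHom : gammaTwoHom.range = Gamma 2 := by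
  refine (MonoidHom.noncommCoprod_range _ _ _).trans ?_
  rw [FreeGroup.range_lift_eq_closure, Matrix.range_cons_cons_empty, range_negOnePowHom,
    ← Subgroup.closure_union, Set.insert_union, Set.singleton_union, Gamma_two_eq_closure]

noncomputable def gammaTwoMulEquiv : Gamma 2 ≃* FreeGroup (Fin 2) × Multiplicative (ZMod 2) :=
  (MulEquiv.subgroupCongr range_gammaTwoHom.symm).trans
    (MonoidHom.ofInjective injective_gammaTwoHom).symm

theorem transvection_one_one_sq_mul_A_mul_B : transvection (1, 1) ^ 2 * (A * B) = -1 := by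
  decide

theorem Gamma_two_le_closure_A_B_transvection_one_one_sq :
    Gamma 2 ≤ Subgroup.closure {A, B, transvection (1, 1) ^ 2} := by
  rw [Gamma_two_eq_closure, Subgroup.closure_le]
  have hmem {g} (hg : g ∈ ({A, B, transvection (1, 1) ^ 2} : Set SL(2, ℤ))) :=
    Subgroup.subset_closure hg
  rintro _ (rfl | rfl | rfl)
  · exact hmem (by simp)
  · exact hmem (by simp)
  · rw [SetLike.mem_coe, ← transvection_one_one_sq_mul_A_mul_B]
    exact mul_mem (hmem (by simp)) (mul_mem (hmem (by simp)) (hmem (by simp)))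

/-- The subgroup of `SL(2,ℤ)` generated by all squares of transvections along primitive
vectors equals `⟨T_{(1,0)}², T_{(0,1)}², T_{(1,1)}²⟩` and is isomorphic to `F₂ × C₂`. -/
theorem stmt_11 :
    Subgroup.closure
        {T : Matrix.SpecialLinearGroup (Fin 2) ℤ |
          ∃ c : ℤ × ℤ, IsCoprime c.1 c.2 ∧ T = (transvection c) ^ 2}
      = Subgroup.closure
          {transvection (1, 0) ^ 2, transvection (0, 1) ^ 2, transvection (1, 1) ^ 2} ∧
    Nonempty ((Subgroup.closure
        {T : Matrix.SpecialLinearGroup (Fin 2) ℤ |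
          ∃ c : ℤ × ℤ, IsCoprime c.1 c.2 ∧ T = (transvection c) ^ 2})
      ≃* FreeGroup (Fin 2) × Multiplicative (ZMod 2)) := by
  set S : Set SL(2, ℤ) := {T | ∃ c : ℤ × ℤ, IsCoprime c.1 c.2 ∧ T = transvection c ^ 2}
  have hsub : Subgroup.closure {A, B, transvection (1, 1) ^ 2} ≤ Subgroup.closure S := by
    refine Subgroup.closure_mono ?_
    rintro _ (rfl | rfl | rfl)
    exacts [⟨_, isCoprime_one_left, rfl⟩, ⟨_, isCoprime_one_right, rfl⟩,
      ⟨_, isCoprime_one_left, rfl⟩]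
  have hGamma : Subgroup.closure S = Gamma 2 :=
    le_antisymm ((Subgroup.closure_le _).2 fun _ ⟨c, _, hc⟩ ↦ hc ▸ transvection_sq_mem_Gamma_two c)
      (Gamma_two_le_closure_A_B_transvection_one_one_sq.trans hsub)
  refine ⟨le_antisymm ?_ hsub, ⟨(MulEquiv.subgroupCongr hGamma).trans gammaTwoMulEquiv⟩⟩
  exact hGamma.le.trans Gamma_two_le_closure_A_B_transvection_one_one_sq
end

section
/- Let s ≥ 3 and let {c_i} be a family of distinct primitive vectors in ℤ² (up to sign) such that for all distinct indices i, j, k, the pairwise absolute determinants d(u,v) = |det(u v)| satisfy d(c_i,c_j) + d(c_j,c_k) + d(c_k,c_i) ≤ s·d(c_i,c_j)·d(c_j,c_k). Then the s-th powers of the transvections T_{c_i} freely generate a free subgroup of SL(2,ℤ). -/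
/-- The geometric intersection number of (the torus curves corresponding to) two
primitive vectors: the absolute value of the determinant. -/
def gInt (u v : ℤ × ℤ) : ℤ := |u.1 * v.2 - u.2 * v.1|

/-!
Ping pong on primitive vectors. Let `closestTo c i` (the paper's `N_i`) be the set of vectors `v`
for which `c i` is the strictly closest of the `c j` in the intersection number
`d(c, v) = |⟨c, v⟩|`. Since `T_c ^ n v = v + n ⟨c, v⟩ c`, the power `T_{c i} ^ n` preserves
`d(c i, ·)` and pushes `d(c k, ·)` up to at least `|n| d(c i, v) d(c k, c i) - d(c k, v)`.
For `v ∈ N_j`, `j ≠ i`, `|n| ≥ s` the image therefore lies in `N_i` once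
`d(c i, v) + d(c k, v) < s d(c i, v) d(c k, c i)` for all `k ≠ i`, which is immediate for `k = j` and follows
from the Plücker relation and the hypothesis on the triple `(k, i, j)` otherwise.
-/

open Pointwise Function

namespace FreeGroup

variable {ι G α : Type*} [Group G] [MulAction G α]

theorem exists_of_default_zpow_eq {β : Type*} [Unique β] (x : FreeGroup β) :
    ∃ n : ℤ, of default ^ n = x :=
  ⟨_, equivIntOfUnique.left_inv x⟩

theorem injective_lift_of_subsingleton [Subsingleton ι] {a : ι → G}
    (ha : ∀ i, ∀ n : ℤ, a i ^ n = 1 → n = 0) : Injective (lift a) := by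
  cases isEmpty_or_nonempty ι
  · exact injective_of_subsingleton _
  inhabit ι
  have := uniqueOfSubsingleton (default : ι)
  refine (injective_iff_map_eq_one _).mpr fun x hx => ?_
  obtain ⟨n, rfl⟩ := exists_of_default_zpow_eq x
  rw [map_zpow, lift_apply_of] at hx
  rw [ha _ n hx, zpow_zero]

theorem injective_lift_of_zpow_ping_pong {a : ι → G} (X : ι → Set α)
    (hXnonempty : ∀ i, (X i).Nonempty) (hXdisj : Pairwise (Disjoint on X))
    (hpp : ∀ i j, i ≠ j → ∀ n : ℤ, n ≠ 0 → a i ^ n • X j ⊆ X i)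
    (ha : ∀ i, ∀ n : ℤ, a i ^ n = 1 → n = 0) : Injective (lift a) := by
  rcases subsingleton_or_nontrivial ι with _ | _
  · exact injective_lift_of_subsingleton ha
  have hlift : lift a = (Monoid.CoprodI.lift fun i => lift fun _ : Unit => a i).comp
      freeGroupEquivCoprodI.toMonoidHom := by
    ext i
    simp
  rw [hlift, MonoidHom.coe_comp]
  refine Injective.comp ?_ freeGroupEquivCoprodI.injective
  refine Monoid.CoprodI.lift_injective_of_ping_pong _ (.inr ⟨Classical.arbitrary ι, ?_⟩)
    X hXnonempty hXdisj fun i j hij h hh => ?_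
  · exact Cardinal.natCast_lt_aleph0.le.trans (Cardinal.aleph0_le_mk _)
  obtain ⟨n, rfl⟩ := exists_of_default_zpow_eq h
  rw [map_zpow, lift_apply_of]
  exact hpp i j hij n (by rintro rfl; exact hh (zpow_zero _))

end FreeGroup

namespace Transvection

def cross (u v : ℤ × ℤ) : ℤ := u.1 * v.2 - u.2 * v.1

theorem gInt_eq_abs_cross (u v : ℤ × ℤ) : gInt u v = |cross u v| := rfl

theorem cross_anticomm (u v : ℤ × ℤ) : cross v u = -cross u v := by
  unfold cross; ring

theorem cross_self (u : ℤ × ℤ) : cross u u = 0 := by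
  unfold cross; ring

theorem cross_add_smul (d v c : ℤ × ℤ) (t : ℤ) :
    cross d (v + t • c) = cross d v + t * cross d c := by
  simp only [cross, Prod.fst_add, Prod.snd_add, Prod.smul_fst, Prod.smul_snd, smul_eq_mul]
  ring

theorem cross_mul_cross (w u a b : ℤ × ℤ) :
    cross w u * cross a b = cross w a * cross u b - cross w b * cross u a := by
  unfold cross; ring

theorem gInt_nonneg (u v : ℤ × ℤ) : 0 ≤ gInt u v := abs_nonneg _

theorem gInt_comm (u v : ℤ × ℤ) : gInt u v = gInt v u := by
  rw [gInt_eq_abs_cross, gInt_eq_abs_cross, cross_anticomm, abs_neg]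

theorem gInt_self (u : ℤ × ℤ) : gInt u u = 0 := by
  rw [gInt_eq_abs_cross, cross_self, abs_zero]

theorem gInt_mul_gInt_le (w u a b : ℤ × ℤ) :
    gInt w u * gInt a b ≤ gInt w a * gInt u b + gInt w b * gInt u a := by
  simp only [gInt_eq_abs_cross, ← abs_mul]
  rw [cross_mul_cross]
  exact abs_sub _ _

theorem eq_or_eq_neg_of_cross_eq_zero {u v : ℤ × ℤ} (hu : IsCoprime u.1 u.2)
    (hv : IsCoprime v.1 v.2) (h : cross u v = 0) : v = u ∨ v = -u := by
  obtain ⟨x, y, hxy⟩ := hu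
  set t := x * v.1 + y * v.2
  have h1 : v.1 = t * u.1 := by unfold cross at h; linear_combination -y * h - v.1 * hxy
  have h2 : v.2 = t * u.2 := by unfold cross at h; linear_combination x * h - v.2 * hxy
  have hv' : v = t • u := Prod.ext h1 h2
  rcases Int.isUnit_iff.mp (hv.isUnit_of_dvd' ⟨u.1, h1⟩ ⟨u.2, h2⟩) with ht | ht <;>
    simp [hv', ht]

theorem gInt_pos {u v : ℤ × ℤ} (hu : IsCoprime u.1 u.2) (hv : IsCoprime v.1 v.2)
    (h : v ≠ u) (h' : v ≠ -u) : 0 < gInt u v :=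
  abs_pos.mpr fun h0 => (eq_or_eq_neg_of_cross_eq_zero hu hv h0).elim h h'

instance : SMul (Matrix.SpecialLinearGroup (Fin 2) ℤ) (ℤ × ℤ) where
  smul g v := (g 0 0 * v.1 + g 0 1 * v.2, g 1 0 * v.1 + g 1 1 * v.2)

theorem smul_def (g : Matrix.SpecialLinearGroup (Fin 2) ℤ) (v : ℤ × ℤ) :
    g • v = (g 0 0 * v.1 + g 0 1 * v.2, g 1 0 * v.1 + g 1 1 * v.2) := rfl

instance : MulAction (Matrix.SpecialLinearGroup (Fin 2) ℤ) (ℤ × ℤ) where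
  one_smul v := by simp [smul_def]
  mul_smul g h v := by
    simp only [smul_def, Matrix.SpecialLinearGroup.coe_mul, Matrix.mul_apply, Fin.sum_univ_two]
    ext <;> ring

theorem transvection_smul (c v : ℤ × ℤ) : transvection c • v = v + cross c v • c := by
  rw [smul_def]
  ext <;>
    simp only [transvection, Matrix.of_apply, Matrix.cons_val', Matrix.cons_val_zero,
      Matrix.cons_val_one, Matrix.cons_val_fin_one, cross, Prod.fst_add, Prod.snd_add,
      Prod.smul_fst, Prod.smul_snd, smul_eq_mul] <;>
    ring

theorem transvection_zpow_smul (c v : ℤ × ℤ) (n : ℤ) :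
    transvection c ^ n • v = v + (n * cross c v) • c := by
  induction n using Int.induction_on with
  | zero => simp
  | succ n ih =>
    rw [zpow_add_one, ← (Commute.self_zpow _ _).eq, mul_smul, ih, transvection_smul,
      cross_add_smul, cross_self]
    module
  | pred n ih =>
    rw [zpow_sub_one, ← ((Commute.self_zpow _ _).inv_left).eq, mul_smul, ih,
      inv_smul_eq_iff, transvection_smul, cross_add_smul, cross_self]
    module

theorem eq_zero_of_transvection_zpow_eq_one {c : ℤ × ℤ} (hc : c ≠ 0) {n : ℤ}
    (h : transvection c ^ n = 1) : n = 0 := by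
  have hq : cross c (-c.2, c.1) ≠ 0 := by
    have : cross c (-c.2, c.1) = c.1 ^ 2 + c.2 ^ 2 := by unfold cross; ring
    rw [this]
    obtain h1 | h2 : c.1 ≠ 0 ∨ c.2 ≠ 0 := by
      by_contra! h0; exact hc (Prod.ext h0.1 h0.2)
    all_goals positivity
  have := congrArg (· • ((-c.2, c.1) : ℤ × ℤ)) h
  simp only [transvection_zpow_smul, one_smul, add_eq_left, smul_eq_zero, hc, or_false] at this
  exact (mul_eq_zero.mp this).resolve_right hq

theorem gInt_transvection_zpow_smul_self (c u : ℤ × ℤ) (n : ℤ) :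
    gInt c (transvection c ^ n • u) = gInt c u := by
  rw [gInt_eq_abs_cross, gInt_eq_abs_cross, transvection_zpow_smul, cross_add_smul, cross_self,
    mul_zero, add_zero]

theorem le_gInt_transvection_zpow_smul (c d u : ℤ × ℤ) (n : ℤ) :
    |n| * gInt c u * gInt d c - gInt d u ≤ gInt d (transvection c ^ n • u) := by
  simp only [gInt_eq_abs_cross, transvection_zpow_smul, cross_add_smul, ← abs_mul]
  rw [add_comm]
  exact abs_sub_abs_le_abs_add _ _

variable {I : Type*} {c : I → ℤ × ℤ} {s : ℕ}

def closestTo (c : I → ℤ × ℤ) (i : I) : Set (ℤ × ℤ) :=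
  {v | ∀ j, j ≠ i → gInt (c i) v < gInt (c j) v}

theorem self_mem_closestTo (hpos : ∀ i j, i ≠ j → 0 < gInt (c i) (c j)) (i : I) :
    c i ∈ closestTo c i := fun j hj => by
  rw [gInt_self, gInt_comm]
  exact hpos i j hj.symm

theorem pairwise_disjoint_closestTo (c : I → ℤ × ℤ) : Pairwise (Disjoint on closestTo c) :=
  fun i j hij => Set.disjoint_left.mpr fun _ hi hj => (hi j hij.symm).not_gt (hj i hij)

theorem add_lt_of_mem_closestTo (hs : 2 ≤ s) (hpos : ∀ i j, i ≠ j → 0 < gInt (c i) (c j))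
    (hprop : ∀ i j k, i ≠ j → j ≠ k → k ≠ i →
      gInt (c i) (c j) + gInt (c j) (c k) + gInt (c k) (c i)
        ≤ s * (gInt (c i) (c j) * gInt (c j) (c k)))
    {i j k : I} {u : ℤ × ℤ} (hij : i ≠ j) (hki : k ≠ i) (hu : u ∈ closestTo c j) :
    gInt (c i) u + gInt (c k) u < s * gInt (c i) u * gInt (c k) (c i) := by
  have hji : gInt (c j) u < gInt (c i) u := hu i hij
  have hki_pos := hpos k i hki
  have hju_nonneg := gInt_nonneg (c j) u
  have hs' : (2 : ℤ) ≤ s := by exact_mod_cast hs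
  by_cases hkj : k = j
  · subst hkj
    have h2 : (2 : ℤ) ≤ s * gInt (c k) (c i) := by nlinarith
    nlinarith [mul_le_mul_of_nonneg_left h2 (gInt_nonneg (c i) u)]
  have hij_pos := hpos i j hij
  have hplucker := gInt_mul_gInt_le (c k) u (c i) (c j)
  have htri := hprop k i j hki hij (Ne.symm hkj)
  rw [gInt_comm u (c j), gInt_comm u (c i), gInt_comm (c k) (c j)] at hplucker
  -- With `A, b, e` the intersections of `u` with `c i, c k, c j` and `D, E, F` those of the
  -- pairs `(k, i), (i, j), (j, k)`: `E (A + b) ≤ E A + D e + F A < A (D + E + F) ≤ s A D E`.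
  refine lt_of_mul_lt_mul_left ?_ hij_pos.le
  nlinarith [mul_lt_mul_of_pos_left hji hki_pos,
    mul_le_mul_of_nonneg_left htri (gInt_nonneg (c i) u)]

theorem zpow_smul_mem_closestTo (hs : 2 ≤ s) (hpos : ∀ i j, i ≠ j → 0 < gInt (c i) (c j))
    (hprop : ∀ i j k, i ≠ j → j ≠ k → k ≠ i →
      gInt (c i) (c j) + gInt (c j) (c k) + gInt (c k) (c i)
        ≤ s * (gInt (c i) (c j) * gInt (c j) (c k)))
    {i j : I} {u : ℤ × ℤ} {n : ℤ} (hij : i ≠ j) (hn : s ≤ |n|) (hu : u ∈ closestTo c j) :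
    transvection (c i) ^ n • u ∈ closestTo c i := fun k hki => by
  have hlower := le_gInt_transvection_zpow_smul (c i) (c k) u n
  have hbound := add_lt_of_mem_closestTo hs hpos hprop hij hki hu
  have hscale : s * gInt (c i) u * gInt (c k) (c i) ≤ |n| * gInt (c i) u * gInt (c k) (c i) := by
    gcongr <;> exact gInt_nonneg _ _
  rw [gInt_transvection_zpow_smul_self]
  linarith

end Transvection

open Transvection in
/-- Theorem A: if primitive vectors `c i` (distinct up to sign) have `s`-proportional
geometric intersection numbers, `s ≥ 3`, then the `s`-th powers of the transvections
along them freely generate a free subgroup of `SL(2,ℤ)`. -/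
theorem stmt_12 {I : Type*} (s : ℕ) (hs : 3 ≤ s) (c : I → ℤ × ℤ)
    (hprim : ∀ i, IsCoprime (c i).1 (c i).2)
    (hdist : ∀ i j, i ≠ j → c i ≠ c j ∧ c i ≠ (-(c j).1, -(c j).2))
    (hprop : ∀ i j k, i ≠ j → j ≠ k → k ≠ i →
      gInt (c i) (c j) + gInt (c j) (c k) + gInt (c k) (c i)
        ≤ s * (gInt (c i) (c j) * gInt (c j) (c k))) :
    Function.Injective (FreeGroup.lift (fun i : I => (transvection (c i)) ^ s)) := by
  have hpos : ∀ i j, i ≠ j → 0 < gInt (c i) (c j) := fun i j hij =>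
    gInt_pos (hprim i) (hprim j) (hdist j i hij.symm).1 (hdist j i hij.symm).2
  refine FreeGroup.injective_lift_of_zpow_ping_pong (closestTo c)
    (fun i => ⟨c i, self_mem_closestTo hpos i⟩) (pairwise_disjoint_closestTo c)
    (fun i j hij n hn => ?_) (fun i n h => ?_)
  · rw [← zpow_natCast, ← zpow_mul]
    rintro _ ⟨u, hu, rfl⟩
    refine zpow_smul_mem_closestTo (by omega) hpos hprop hij ?_ hu
    rw [abs_mul, Nat.abs_cast]
    exact le_mul_of_one_le_right (by positivity) (Int.one_le_abs hn)
  · rw [← zpow_natCast, ← zpow_mul] at h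
    have hc : c i ≠ 0 := fun h0 => not_isCoprime_zero_zero (h0 ▸ hprim i)
    have := eq_zero_of_transvection_zpow_eq_one hc h
    simpa [show s ≠ 0 by omega] using this
end

section
/- Suppose x, y, z are primitive vectors in ℤ² (representing simple closed curves on the torus) with pairwise geometric intersection numbers d(x,y)=1 and d(y,z)=1 and d(x,z) ≤ 1, where d(u,v)=|det(u v)|. If d(x,z)=1, then after a change of basis of ℤ² by an element of SL(2,ℤ), and after applying powers of the squared transvections T_x² and T_y² to z, one may take x=(1,0), y=(0,1), z=(1,1). -/
open scoped Matrix

/-- The algebraic intersection form `⟨u, v⟩ = det (u v)` on `ℤ²`. -/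
def wedge (u v : ℤ × ℤ) : ℤ := u.1 * v.2 - u.2 * v.1

lemma wedge_self (u : ℤ × ℤ) : wedge u u = 0 := by
  unfold wedge; ring

lemma abs_wedge_comm (u v : ℤ × ℤ) : |wedge u v| = |wedge v u| := by
  rw [← abs_neg]; unfold wedge; ring_nf

lemma mulVec_fin_two (p q r s u v : ℤ) :
    !![p, q; r, s] *ᵥ ![u, v] = ![p * u + q * v, r * u + s * v] := by
  ext i; fin_cases i <;> simp [Matrix.mulVec, dotProduct, Fin.sum_univ_two]

lemma exists_SL_mulVec_eq_wedge {x y : ℤ × ℤ} (hxy : |wedge x y| = 1) :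
    ∃ g : Matrix.SpecialLinearGroup (Fin 2) ℤ, ∀ v : ℤ × ℤ,
      (g : Matrix (Fin 2) (Fin 2) ℤ) *ᵥ ![v.1, v.2] = ![wedge x y * wedge v y, wedge x v] := by
  set ε := wedge x y with hε
  have hε_sq : ε * ε = 1 := by rw [← abs_mul_abs_self, hxy, one_mul]
  have hdet : (!![ε * y.2, -(ε * y.1); -x.2, x.1]).det = 1 := by
    rw [Matrix.det_fin_two_of]; unfold wedge at hε; linear_combination -ε * hε + hε_sq
  refine ⟨⟨_, hdet⟩, fun v => ?_⟩
  change !![ε * y.2, -(ε * y.1); -x.2, x.1] *ᵥ ![v.1, v.2] = _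
  rw [mulVec_fin_two]; unfold wedge; ring_nf

lemma coe_transvection_one_zero_sq :
    ((transvection (1, 0) ^ 2 : Matrix.SpecialLinearGroup (Fin 2) ℤ) :
      Matrix (Fin 2) (Fin 2) ℤ) = !![1, 2; 0, 1] := by
  rw [Matrix.SpecialLinearGroup.coe_pow]
  norm_num [transvection, pow_two]

lemma vec_eq_one_one_or_neg_one_neg_one {s : ℤ} (hs : |s| = 1) :
    ![s, s] = ![1, 1] ∨ ![s, s] = ![-1, -1] := by
  rcases abs_eq zero_le_one |>.mp hs with rfl | rfl <;> simp

lemma exists_mem_closure_transvection_sq_mulVec {s t : ℤ} (hs : |s| = 1) (ht : |t| = 1) :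
    ∃ h ∈ Subgroup.closure {transvection (1, 0) ^ 2, transvection (0, 1) ^ 2},
      ((h : Matrix.SpecialLinearGroup (Fin 2) ℤ) : Matrix (Fin 2) (Fin 2) ℤ) *ᵥ ![s, t] = ![1, 1] ∨
      ((h : Matrix.SpecialLinearGroup (Fin 2) ℤ) : Matrix (Fin 2) (Fin 2) ℤ) *ᵥ ![s, t] =
        ![-1, -1] := by
  rcases abs_eq_abs.mp (ht.trans hs.symm) with rfl | rfl
  · exact ⟨1, one_mem _, by simpa using vec_eq_one_one_or_neg_one_neg_one hs⟩
  · refine ⟨_, Subgroup.subset_closure (Set.mem_insert _ _), ?_⟩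
    rw [coe_transvection_one_zero_sq, mulVec_fin_two,
      show 1 * s + 2 * -s = -s by ring, show 0 * s + 1 * -s = -s by ring]
    exact vec_eq_one_one_or_neg_one_neg_one (by rwa [abs_neg])

theorem stmt_17_general (x y z : ℤ × ℤ)
    (hxy : |x.1 * y.2 - x.2 * y.1| = 1) (hyz : |y.1 * z.2 - y.2 * z.1| = 1)
    (hxz : |x.1 * z.2 - x.2 * z.1| = 1) :
    ∃ g : Matrix.SpecialLinearGroup (Fin 2) ℤ,
      ((g : Matrix (Fin 2) (Fin 2) ℤ).mulVec ![x.1, x.2] = ![1, 0] ∨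
        (g : Matrix (Fin 2) (Fin 2) ℤ).mulVec ![x.1, x.2] = ![-1, 0]) ∧
      ((g : Matrix (Fin 2) (Fin 2) ℤ).mulVec ![y.1, y.2] = ![0, 1] ∨
        (g : Matrix (Fin 2) (Fin 2) ℤ).mulVec ![y.1, y.2] = ![0, -1]) ∧
      ∃ h ∈ Subgroup.closure {transvection (1, 0) ^ 2, transvection (0, 1) ^ 2},
        (((h : Matrix.SpecialLinearGroup (Fin 2) ℤ) * g : Matrix.SpecialLinearGroup (Fin 2) ℤ)
              : Matrix (Fin 2) (Fin 2) ℤ).mulVec ![z.1, z.2] = ![1, 1] ∨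
          (((h : Matrix.SpecialLinearGroup (Fin 2) ℤ) * g : Matrix.SpecialLinearGroup (Fin 2) ℤ)
              : Matrix (Fin 2) (Fin 2) ℤ).mulVec ![z.1, z.2] = ![-1, -1] := by
  change |wedge x y| = 1 at hxy
  change |wedge y z| = 1 at hyz
  change |wedge x z| = 1 at hxz
  obtain ⟨g, hg⟩ := exists_SL_mulVec_eq_wedge hxy
  have hε_sq : wedge x y * wedge x y = 1 := by rw [← abs_mul_abs_self, hxy, one_mul]
  have hgz : |wedge x y * wedge z y| = 1 := by rw [abs_mul, hxy, abs_wedge_comm, hyz, one_mul]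
  obtain ⟨h, hh, hhz⟩ := exists_mem_closure_transvection_sq_mulVec hgz hxz
  refine ⟨g, Or.inl ?_, ?_, h, hh, ?_⟩
  · rw [hg, hε_sq, wedge_self]
  · rw [hg, wedge_self, mul_zero]
    rcases abs_eq zero_le_one |>.mp hxy with hε | hε <;> rw [hε] <;> simp
  · rwa [Matrix.SpecialLinearGroup.coe_mul, ← Matrix.mulVec_mulVec, hg]

/-- If `x, y, z` are primitive with pairwise intersection numbers all equal to `1`, then
after a change of basis by an element of `SL(2,ℤ)` sending `x` to `±(1,0)` and `y` to
`±(0,1)`, and after applying a word in the squared transvections `T_x², T_y²` to `z`,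
one may take `x = (1,0)`, `y = (0,1)`, `z = (1,1)` (up to sign). -/
theorem stmt_17 (x y z : ℤ × ℤ)
    (hx : IsCoprime x.1 x.2) (hy : IsCoprime y.1 y.2) (hz : IsCoprime z.1 z.2)
    (hxy : |x.1 * y.2 - x.2 * y.1| = 1) (hyz : |y.1 * z.2 - y.2 * z.1| = 1)
    (hxz : |x.1 * z.2 - x.2 * z.1| = 1) :
    ∃ g : Matrix.SpecialLinearGroup (Fin 2) ℤ,
      ((g : Matrix (Fin 2) (Fin 2) ℤ).mulVec ![x.1, x.2] = ![1, 0] ∨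
        (g : Matrix (Fin 2) (Fin 2) ℤ).mulVec ![x.1, x.2] = ![-1, 0]) ∧
      ((g : Matrix (Fin 2) (Fin 2) ℤ).mulVec ![y.1, y.2] = ![0, 1] ∨
        (g : Matrix (Fin 2) (Fin 2) ℤ).mulVec ![y.1, y.2] = ![0, -1]) ∧
      ∃ h ∈ Subgroup.closure {transvection (1, 0) ^ 2, transvection (0, 1) ^ 2},
        (((h : Matrix.SpecialLinearGroup (Fin 2) ℤ) * g : Matrix.SpecialLinearGroup (Fin 2) ℤ)
              : Matrix (Fin 2) (Fin 2) ℤ).mulVec ![z.1, z.2] = ![1, 1] ∨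
          (((h : Matrix.SpecialLinearGroup (Fin 2) ℤ) * g : Matrix.SpecialLinearGroup (Fin 2) ℤ)
              : Matrix (Fin 2) (Fin 2) ℤ).mulVec ![z.1, z.2] = ![-1, -1] :=
  stmt_17_general x y z hxy hyz hxz
end
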